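/- Let g₁, g₂ be commuting finite-order automorphisms of a finite-dimensional complex vector space V. Then the quantity L(g₁)(V) + L(g₂)(V) − L(g₁g₂)(V) is a non-negative integer. -/

import Mathlib

/-- The logarithmic trace `L(g)(V)` of an automorphism `g` with `g ^ n = 1`:
the sum over `k < n` of `(k/n) · dim V_{k/n}`, where `V_{k/n}` is the eigenspace
of `g` for the eigenvalue `exp(2πi·k/n)`. -/
noncomputable def logTrace {V : Type} [AddCommGroup V] [Module ℂ V]
    (n : ℕ) (g : V →ₗ[ℂ] V) : ℚ :=
  ∑ k ∈ Finset.range n, (k : ℚ) / (n : ℚ) *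
    (Module.finrank ℂ
      (Module.End.eigenspace g (Complex.exp (2 * (Real.pi : ℂ) * Complex.I * ((k : ℂ) / (n : ℂ))))) : ℚ)

/-! With `ζ = exp (2πi/n)`, the commuting automorphisms `g₁, g₂` of finite order are simultaneously
diagonalizable, so `V` splits into joint eigenspaces `V_{a,b}` on which `g₁`, `g₂`, `g₁ g₂` act by
`ζ ^ a`, `ζ ^ b`, `ζ ^ ((a + b) % n)` (`a, b < n`). Hence
`L(g₁) + L(g₂) - L(g₁ g₂) = ∑ (a + b - (a + b) % n) / n · dim V_{a,b}`,
and every coefficient is the carry `⌊(a + b) / n⌋ ∈ {0, 1}`. -/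

open Module Module.End Polynomial

section FiniteOrder

variable {K V : Type*} [Field K] [AddCommGroup V] [Module K V] {f g : End K V} {n : ℕ} {ζ : K}

lemma eigenspace_mul_inf_eigenspace (hfg : Commute f g) {μ : K} (hμ : μ ≠ 0) (ν : K) :
    (f * g).eigenspace (μ * ν) ⊓ f.eigenspace μ = g.eigenspace ν ⊓ f.eigenspace μ := by
  ext x
  simp only [Submodule.mem_inf, mem_eigenspace_iff, and_congr_left_iff]
  intro hx
  rw [hfg.eq, mul_apply, hx, map_smul, mul_smul, (smul_right_injective V hμ).eq_iff]

lemma Module.End.HasEigenvector.pow_eq_one_of_pow_eq_one {μ : K} {v : V}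
    (hv : f.HasEigenvector μ v) (hf : f ^ n = 1) : μ ^ n = 1 :=
  smul_left_injective K hv.2 <| by simpa [hf] using (hv.pow_apply n).symm

variable [FiniteDimensional K V] [IsAlgClosed K] [NeZero n]

lemma iSup_eigenspace_pow_eq_top (hζ : IsPrimitiveRoot ζ n) (hf : f ^ n = 1) :
    ⨆ k : Fin n, f.eigenspace (ζ ^ (k : ℕ)) = ⊤ := by
  have hss : f.IsSemisimple := by
    have := hζ.neZero'
    refine isSemisimple_of_squarefree_aeval_eq_zero (p := X ^ n - 1) ?_ (by simp [hf])
    exact (X_pow_sub_one_separable_iff.mpr (NeZero.ne _)).squarefree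
  rw [eq_top_iff, ← hss.iSup_eigenspace_eq_top]
  refine iSup_le fun μ => ?_
  rcases eq_or_ne (f.eigenspace μ) ⊥ with h | h
  · simp [h]
  obtain ⟨v, hv⟩ := HasEigenvalue.exists_hasEigenvector h
  obtain ⟨k, hk, rfl⟩ := hζ.eq_pow_of_pow_eq_one (hv.pow_eq_one_of_pow_eq_one hf)
  exact le_iSup (fun k : Fin n => f.eigenspace (ζ ^ (k : ℕ))) ⟨k, hk⟩

lemma finrank_eq_sum_finrank_eigenspace_pow (hζ : IsPrimitiveRoot ζ n) (hf : f ^ n = 1) :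
    finrank K V = ∑ k : Fin n, finrank K (f.eigenspace (ζ ^ (k : ℕ))) := by
  have hind : iSupIndep fun k : Fin n => f.eigenspace (ζ ^ (k : ℕ)) :=
    f.eigenspaces_iSupIndep.comp fun a b h => Fin.ext (hζ.pow_inj a.2 b.2 h)
  have hint := DirectSum.isInternal_submodule_of_iSupIndep_of_iSup_eq_top hind
    (iSup_eigenspace_pow_eq_top hζ hf)
  rw [← (LinearEquiv.ofBijective (DirectSum.coeLinearMap _) hint).finrank_eq, finrank_directSum]

lemma finrank_eq_sum_finrank_inf_eigenspace_pow (hζ : IsPrimitiveRoot ζ n) (hf : f ^ n = 1)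
    (p : Submodule K V) (hp : ∀ x ∈ p, f x ∈ p) :
    finrank K p = ∑ k : Fin n, finrank K ↥(p ⊓ f.eigenspace (ζ ^ (k : ℕ))) := by
  have hfp : f.restrict hp ^ n = 1 := by
    ext x
    simp [pow_restrict, LinearMap.restrict_apply, hf]
  rw [finrank_eq_sum_finrank_eigenspace_pow hζ hfp]
  refine Finset.sum_congr rfl fun k _ => ?_
  rw [show eigenspace (f.restrict hp) _ = _ from genEigenspace_restrict f p 1 _ hp,
    ← Submodule.map_comap_subtype]
  exact (Submodule.equivSubtypeMap p _).finrank_eq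

lemma finrank_eigenspace_eq_sum_finrank_inf (hζ : IsPrimitiveRoot ζ n) (hf : f ^ n = 1)
    (hfg : Commute f g) (μ : K) :
    finrank K (g.eigenspace μ) =
      ∑ k : Fin n, finrank K ↥(g.eigenspace μ ⊓ f.eigenspace (ζ ^ (k : ℕ))) :=
  finrank_eq_sum_finrank_inf_eigenspace_pow hζ hf _ fun _ hx =>
    mapsTo_genEigenspace_of_comm hfg.symm μ 1 hx

end FiniteOrder

lemma pow_fin_val_add {M : Type*} [Monoid M] {ζ : M} {n : ℕ} (hζ : ζ ^ n = 1)
    (a b : Fin n) : ζ ^ ((a + b : Fin n) : ℕ) = ζ ^ (a : ℕ) * ζ ^ (b : ℕ) := by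
  rw [Fin.val_add, ← pow_eq_pow_mod _ hζ, pow_add]

lemma Fin.val_div_add_val_div_sub_val_add_div {n : ℕ} [NeZero n] (a b : Fin n) :
    ((a : ℕ) / n : ℚ) + (b : ℕ) / n - ((a + b : Fin n) : ℕ) / n = (((a : ℕ) + b) / n : ℕ) := by
  have h := Nat.mod_add_div ((a : ℕ) + b) n
  rw [Fin.val_add, ← add_div, ← sub_div, div_eq_iff (NeZero.ne (n : ℚ))]
  have hq : (((a + b : ℕ) % n : ℕ) : ℚ) + n * ((a + b : ℕ) / n : ℕ) = (a : ℕ) + (b : ℕ) := by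
    exact_mod_cast h
  linarith

section CommutingPair

variable {K V R : Type*} [Field K] [IsAlgClosed K] [AddCommGroup V] [Module K V]
  [FiniteDimensional K V] [Semiring R] {f g : End K V} {n : ℕ} [NeZero n] {ζ : K}

lemma sum_mul_finrank_eigenspace_left (hζ : IsPrimitiveRoot ζ n) (hg : g ^ n = 1)
    (hfg : Commute f g) (w : Fin n → R) :
    ∑ a : Fin n, w a * finrank K (f.eigenspace (ζ ^ (a : ℕ))) =
      ∑ a : Fin n, ∑ b : Fin n,
        w a * finrank K ↥(g.eigenspace (ζ ^ (b : ℕ)) ⊓ f.eigenspace (ζ ^ (a : ℕ))) := by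
  refine Fintype.sum_congr _ _ fun a => ?_
  rw [finrank_eigenspace_eq_sum_finrank_inf hζ hg hfg.symm, Nat.cast_sum, Finset.mul_sum]
  exact Fintype.sum_congr _ _ fun b => by rw [inf_comm]

lemma sum_mul_finrank_eigenspace_right (hζ : IsPrimitiveRoot ζ n) (hf : f ^ n = 1)
    (hfg : Commute f g) (w : Fin n → R) :
    ∑ b : Fin n, w b * finrank K (g.eigenspace (ζ ^ (b : ℕ))) =
      ∑ a : Fin n, ∑ b : Fin n,
        w b * finrank K ↥(g.eigenspace (ζ ^ (b : ℕ)) ⊓ f.eigenspace (ζ ^ (a : ℕ))) := by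
  rw [Finset.sum_comm]
  refine Fintype.sum_congr _ _ fun b => ?_
  rw [finrank_eigenspace_eq_sum_finrank_inf hζ hf hfg, Nat.cast_sum, Finset.mul_sum]

lemma sum_mul_finrank_eigenspace_mul (hζ : IsPrimitiveRoot ζ n) (hf : f ^ n = 1)
    (hfg : Commute f g) (w : Fin n → R) :
    ∑ c : Fin n, w c * finrank K ((f * g).eigenspace (ζ ^ (c : ℕ))) =
      ∑ a : Fin n, ∑ b : Fin n,
        w (a + b) * finrank K ↥(g.eigenspace (ζ ^ (b : ℕ)) ⊓ f.eigenspace (ζ ^ (a : ℕ))) := by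
  calc ∑ c : Fin n, w c * finrank K ((f * g).eigenspace (ζ ^ (c : ℕ)))
      = ∑ a : Fin n, ∑ c : Fin n,
          w c * finrank K ↥((f * g).eigenspace (ζ ^ (c : ℕ)) ⊓ f.eigenspace (ζ ^ (a : ℕ))) := by
        rw [Finset.sum_comm]
        refine Fintype.sum_congr _ _ fun c => ?_
        rw [finrank_eigenspace_eq_sum_finrank_inf hζ hf ((Commute.refl f).mul_right hfg),
          Nat.cast_sum, Finset.mul_sum]
    _ = ∑ a : Fin n, ∑ b : Fin n, w (a + b) * finrank K
          ↥((f * g).eigenspace (ζ ^ ((a + b : Fin n) : ℕ)) ⊓ f.eigenspace (ζ ^ (a : ℕ))) :=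
        Fintype.sum_congr _ _ fun a => (Equiv.sum_comp (Equiv.addLeft a) _).symm
    _ = _ := Fintype.sum_congr _ _ fun a => Fintype.sum_congr _ _ fun b => by
        rw [pow_fin_val_add hζ.pow_eq_one,
          eigenspace_mul_inf_eigenspace hfg (pow_ne_zero _ (hζ.ne_zero (NeZero.ne n)))]

end CommutingPair

lemma logTrace_eq_sum_fin {V : Type} [AddCommGroup V] [Module ℂ V] (n : ℕ) [NeZero n]
    (f : End ℂ V) :
    logTrace n f = ∑ k : Fin n, ((k : ℕ) / n : ℚ) *
      finrank ℂ (f.eigenspace (Complex.exp (2 * Real.pi * Complex.I / n) ^ (k : ℕ))) := by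
  rw [logTrace, ← Fin.sum_univ_eq_sum_range]
  refine Fintype.sum_congr _ _ fun k => ?_
  rw [← Complex.exp_nat_mul, mul_div_left_comm, mul_comm ((k : ℕ) : ℂ), mul_div_assoc]

/-- For commuting finite-order automorphisms `g₁, g₂`,
`V⁺(g₁,g₂) = L(g₁)(V) + L(g₂)(V) − L(g₁g₂)(V)` is a non-negative integer. -/
theorem logTrace_pair_nonneg_integer {V : Type} [AddCommGroup V] [Module ℂ V]
    [FiniteDimensional ℂ V] (g₁ g₂ : V ≃ₗ[ℂ] V) (n : ℕ) (hn : 0 < n)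
    (h₁ : g₁ ^ n = 1) (h₂ : g₂ ^ n = 1) (hc : g₁ * g₂ = g₂ * g₁) :
    ∃ m : ℕ,
      logTrace n (g₁ : V →ₗ[ℂ] V) + logTrace n (g₂ : V →ₗ[ℂ] V)
        - logTrace n ((g₁ * g₂ : V ≃ₗ[ℂ] V) : V →ₗ[ℂ] V) = m := by
  have : NeZero n := ⟨hn.ne'⟩
  set ζ := Complex.exp (2 * Real.pi * Complex.I / n)
  have hζ : IsPrimitiveRoot ζ n := Complex.isPrimitiveRoot_exp n hn.ne'
  let φ := LinearEquiv.automorphismGroup.toLinearMapMonoidHom (R := ℂ) (M := V)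
  have hf₁ : φ g₁ ^ n = 1 := by rw [← map_pow, h₁, map_one]
  have hf₂ : φ g₂ ^ n = 1 := by rw [← map_pow, h₂, map_one]
  have hcomm : Commute (φ g₁) (φ g₂) := (show Commute g₁ g₂ from hc).map φ
  refine ⟨∑ a : Fin n, ∑ b : Fin n, ((a : ℕ) + b) / n *
    finrank ℂ ↥(eigenspace (φ g₂) (ζ ^ (b : ℕ)) ⊓ eigenspace (φ g₁) (ζ ^ (a : ℕ))), ?_⟩
  change logTrace n (φ g₁) + logTrace n (φ g₂) - logTrace n (φ g₁ * φ g₂) = _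
  rw [logTrace_eq_sum_fin, logTrace_eq_sum_fin, logTrace_eq_sum_fin,
    sum_mul_finrank_eigenspace_left hζ hf₂ hcomm,
    sum_mul_finrank_eigenspace_right hζ hf₁ hcomm, sum_mul_finrank_eigenspace_mul hζ hf₁ hcomm]
  push_cast
  simp only [← Finset.sum_add_distrib, ← Finset.sum_sub_distrib, ← add_mul, ← sub_mul,
    Fin.val_div_add_val_div_sub_val_add_div]
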